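/- arXiv:2207.10211 — 2 statements merged into one kernel-verified Lean document; each statement's English description precedes it below -/
import Mathlib

section
/- The differentiation operator D is bounded on the weighted Banach space L^∞_μ(T) if and only if sup_{v≠o} μ(v)/μ(v⁻) < ∞, and in that case ‖D‖ = 1 + sup_{v≠o} μ(v)/μ(v⁻). -/
/-- Discrete derivative on a rooted tree: `f'(o)=0`, `f'(v)=f(v)-f(parent v)`. -/
noncomputable def dderiv {V : Type*} [DecidableEq V] (o : V) (par : V → V) (f : V → ℂ) : V → ℂ :=
  fun v => if v = o then 0 else f v - f (par v)

open Classical in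
/-- Level (distance to the root) of a vertex. -/
noncomputable def lvl {V : Type*} (o : V) (par : V → V)
    (hreach : ∀ v : V, ∃ n : ℕ, par^[n] v = o) (v : V) : ℕ :=
  Nat.find (hreach v)

lemma par_ne_self {V : Type*} (o : V) (par : V → V)
    (hreach : ∀ v : V, ∃ n : ℕ, par^[n] v = o) {v : V} (hv : v ≠ o) :
    par v ≠ v := by
  intro h
  obtain ⟨n, hn⟩ := hreach v
  have hfix : par^[n] v = v := Function.iterate_fixed h n
  exact hv (hfix ▸ hn)

lemma key_bound {V : Type*} [DecidableEq V] (o : V) (par : V → V)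
    (μ : V → ℝ) (hμ : ∀ v, 0 < μ v) (hne : Nonempty {v : V // v ≠ o})
    (hb : BddAbove (Set.range fun v : {v : V // v ≠ o} => μ v.1 / μ (par v.1)))
    (f : V → ℂ) (hf : BddAbove (Set.range fun v => μ v * ‖f v‖)) (v : V) :
    μ v * ‖dderiv o par f v‖ ≤
      (1 + ⨆ v : {v : V // v ≠ o}, μ v.1 / μ (par v.1)) * ⨆ v, μ v * ‖f v‖ := by
  set S := ⨆ v : {v : V // v ≠ o}, μ v.1 / μ (par v.1) with hS
  set M := ⨆ v, μ v * ‖f v‖ with hM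
  have hM0 : 0 ≤ M := by
    have := le_ciSup hf o
    have h0 : 0 ≤ μ o * ‖f o‖ :=
      mul_nonneg (hμ o).le (norm_nonneg _)
    linarith
  have hS0 : 0 ≤ S := by
    obtain ⟨w⟩ := hne
    have := le_ciSup hb w
    have h0 : 0 ≤ μ w.1 / μ (par w.1) := div_nonneg (hμ _).le (hμ _).le
    linarith
  by_cases hv : v = o
  · have hz : dderiv o par f v = 0 := by simp [dderiv, hv]
    rw [hz, norm_zero, mul_zero]
    exact mul_nonneg (by linarith) hM0
  · have hle1 : μ v * ‖f v‖ ≤ M := le_ciSup hf v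
    have hle2 : μ (par v) * ‖f (par v)‖ ≤ M := le_ciSup hf (par v)
    have hrat : μ v / μ (par v) ≤ S := le_ciSup hb ⟨v, hv⟩
    have heq : μ v * ‖f (par v)‖ =
        (μ v / μ (par v)) * (μ (par v) * ‖f (par v)‖) := by
      rw [div_mul_eq_mul_div, mul_div_assoc, mul_comm (μ (par v)), mul_div_assoc,
        div_self (hμ (par v)).ne', mul_one]
    have h2 : μ v * ‖f (par v)‖ ≤ S * M := by
      rw [heq]
      exact mul_le_mul hrat hle2 (mul_nonneg (hμ _).le (norm_nonneg _)) hS0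
    have htri : ‖f v - f (par v)‖ ≤
        ‖f v‖ + ‖f (par v)‖ := by
      simpa [sub_eq_add_neg] using norm_add_le (f v) (-(f (par v)))
    calc μ v * ‖dderiv o par f v‖
        = μ v * ‖f v - f (par v)‖ := by
          simp only [dderiv, if_neg hv]
      _ ≤ μ v * (‖f v‖ + ‖f (par v)‖) :=
          mul_le_mul_of_nonneg_left htri (hμ v).le
      _ = μ v * ‖f v‖ + μ v * ‖f (par v)‖ := by ring
      _ ≤ M + S * M := add_le_add hle1 h2
      _ = (1 + S) * M := by ring

theorem stmt15 {V : Type*} [DecidableEq V] (o : V) (par : V → V) (hpar : par o = o)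
    (hreach : ∀ v : V, ∃ n : ℕ, par^[n] v = o)
    (hchild : ∀ v : V, ∃ u : V, u ≠ o ∧ par u = v)
    (μ : V → ℝ) (hμ : ∀ v, 0 < μ v) :
    ((∃ C : ℝ, ∀ f : V → ℂ,
        BddAbove (Set.range fun v => μ v * ‖f v‖) →
        BddAbove (Set.range fun v => μ v * ‖dderiv o par f v‖) ∧
        (⨆ v, μ v * ‖dderiv o par f v‖) ≤ C * ⨆ v, μ v * ‖f v‖) ↔
      BddAbove (Set.range fun v : {v : V // v ≠ o} => μ v.1 / μ (par v.1))) ∧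
    (BddAbove (Set.range fun v : {v : V // v ≠ o} => μ v.1 / μ (par v.1)) →
      IsLeast {C : ℝ | ∀ f : V → ℂ,
          BddAbove (Set.range fun v => μ v * ‖f v‖) →
          (⨆ v, μ v * ‖dderiv o par f v‖) ≤ C * ⨆ v, μ v * ‖f v‖}
        (1 + ⨆ v : {v : V // v ≠ o}, μ v.1 / μ (par v.1))) := by
  have hne : Nonempty {v : V // v ≠ o} := by
    obtain ⟨u, hu, _⟩ := hchild o
    exact ⟨⟨u, hu⟩⟩
  haveI : Nonempty V := ⟨o⟩
  have test_norm : ∀ (g : V → ℂ), (∀ v, μ v * ‖g v‖ ≤ 1) →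
      (∃ w, μ w * ‖g w‖ = 1) →
      BddAbove (Set.range fun v => μ v * ‖g v‖) ∧
      (⨆ v, μ v * ‖g v‖) = 1 := by
    intro g hle ⟨w, hw⟩
    have hbdd : BddAbove (Set.range fun v => μ v * ‖g v‖) := by
      refine ⟨1, ?_⟩
      rintro x ⟨v, rfl⟩
      exact hle v
    refine ⟨hbdd, le_antisymm (ciSup_le hle) ?_⟩
    calc (1 : ℝ) = μ w * ‖g w‖ := hw.symm
      _ ≤ _ := le_ciSup hbdd w
  constructor
  · constructor
    · -- boundedness of D implies ratios bounded
      rintro ⟨C, hC⟩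
      refine ⟨C, ?_⟩
      rintro x ⟨⟨v₀, hv₀⟩, rfl⟩
      simp only
      have hne' : v₀ ≠ par v₀ := (par_ne_self o par hreach hv₀).symm
      set g : V → ℂ := fun v => if v = par v₀ then (↑(μ (par v₀))⁻¹ : ℂ) else 0 with hg
      have hgv : ∀ v, μ v * ‖g v‖ = if v = par v₀ then 1 else 0 := by
        intro v
        simp only [hg]
        by_cases h : v = par v₀
        · rw [if_pos h, if_pos h, h, Complex.norm_real, Real.norm_eq_abs, abs_inv,
            abs_of_pos (hμ (par v₀)), mul_inv_cancel₀ (hμ (par v₀)).ne']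
        · rw [if_neg h, if_neg h, norm_zero, mul_zero]
      have hn := test_norm g (fun v => by rw [hgv v]; split <;> norm_num)
        ⟨par v₀, by rw [hgv (par v₀)]; simp⟩
      obtain ⟨hDbdd, hDle⟩ := hC g hn.1
      have hval : μ v₀ * ‖dderiv o par g v₀‖ = μ v₀ / μ (par v₀) := by
        have hd : dderiv o par g v₀ = -(↑((μ (par v₀))⁻¹) : ℂ) := by
          simp [dderiv, hg, hv₀, hne']
        rw [hd, norm_neg, Complex.norm_real, Real.norm_eq_abs, abs_inv,
          abs_of_pos (hμ (par v₀)), div_eq_mul_inv]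
      calc μ v₀ / μ (par v₀) = μ v₀ * ‖dderiv o par g v₀‖ := hval.symm
        _ ≤ ⨆ v, μ v * ‖dderiv o par g v‖ := le_ciSup hDbdd v₀
        _ ≤ C * ⨆ v, μ v * ‖g v‖ := hDle
        _ = C := by rw [hn.2, mul_one]
    · -- ratios bounded implies D bounded with C = 1 + S
      intro hb
      refine ⟨1 + ⨆ v : {v : V // v ≠ o}, μ v.1 / μ (par v.1), ?_⟩
      intro f hf
      have hpt := key_bound o par μ hμ hne hb f hf
      exact ⟨⟨_, by rintro x ⟨v, rfl⟩; exact hpt v⟩, ciSup_le hpt⟩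
  · intro hb
    set S := ⨆ v : {v : V // v ≠ o}, μ v.1 / μ (par v.1) with hS
    constructor
    · -- membership
      intro f hf
      exact ciSup_le (key_bound o par μ hμ hne hb f hf)
    · -- lower bound
      rintro C hC
      rw [Set.mem_setOf_eq] at hC
      have hrat : ∀ v₀ : {v : V // v ≠ o}, 1 + μ v₀.1 / μ (par v₀.1) ≤ C := by
        rintro ⟨v₀, hv₀⟩
        simp only
        have hne' : v₀ ≠ par v₀ := (par_ne_self o par hreach hv₀).symm
        set g : V → ℂ := fun v =>
          if v = v₀ then (↑(μ v₀)⁻¹ : ℂ)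
          else if v = par v₀ then (-↑(μ (par v₀))⁻¹ : ℂ) else 0 with hg
        have hgv : ∀ v, μ v * ‖g v‖ =
            if v = v₀ then 1 else if v = par v₀ then 1 else 0 := by
          intro v
          simp only [hg]
          by_cases h : v = v₀
          · rw [if_pos h, if_pos h, h, Complex.norm_real, Real.norm_eq_abs, abs_inv,
              abs_of_pos (hμ v₀), mul_inv_cancel₀ (hμ v₀).ne']
          · rw [if_neg h, if_neg h]
            by_cases h2 : v = par v₀
            · rw [if_pos h2, if_pos h2, h2, norm_neg, Complex.norm_real, Real.norm_eq_abs,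
                abs_inv, abs_of_pos (hμ (par v₀)), mul_inv_cancel₀ (hμ (par v₀)).ne']
            · rw [if_neg h2, if_neg h2, norm_zero, mul_zero]
        have hn := test_norm g
          (fun v => by rw [hgv v]; split
                       · norm_num
                       · split <;> norm_num)
          ⟨v₀, by rw [hgv v₀]; simp⟩
        have hval : μ v₀ * ‖dderiv o par g v₀‖ = 1 + μ v₀ / μ (par v₀) := by
          have hd : dderiv o par g v₀ =
              (↑((μ v₀)⁻¹ + (μ (par v₀))⁻¹ : ℝ) : ℂ) := by
            have h2 : par v₀ ≠ v₀ := Ne.symm hne'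
            simp only [dderiv, hg, if_neg hv₀, if_pos rfl, if_neg h2, sub_neg_eq_add]
            push_cast; ring
          rw [hd, Complex.norm_real, Real.norm_eq_abs,
            abs_of_pos (add_pos (inv_pos.2 (hμ v₀)) (inv_pos.2 (hμ (par v₀)))),
            mul_add, mul_inv_cancel₀ (hμ v₀).ne', div_eq_mul_inv]
        have hDbdd : BddAbove (Set.range fun v => μ v * ‖dderiv o par g v‖) := by
          refine ⟨(1 + S) * ⨆ v, μ v * ‖g v‖, ?_⟩
          rintro x ⟨v, rfl⟩
          exact key_bound o par μ hμ hne hb g hn.1 v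
        calc 1 + μ v₀ / μ (par v₀)
            = μ v₀ * ‖dderiv o par g v₀‖ := hval.symm
          _ ≤ ⨆ v, μ v * ‖dderiv o par g v‖ := le_ciSup hDbdd v₀
          _ ≤ C * ⨆ v, μ v * ‖g v‖ := hC g hn.1
          _ = C := by rw [hn.2, mul_one]
      have hSle : S ≤ C - 1 := ciSup_le fun v₀ => by linarith [hrat v₀]
      linarith
end

section
/- On the Hardy space T_p of a (q+1)-homogeneous rooted tree (1 ≤ p < ∞), the differentiation operator D has operator norm exactly 2: the radially defined function f with f(o) = -1, f(v) = 1 for |v| = 1, and f(v) = 0 for |v| ≥ 2 satisfies ‖f‖_p = 1 and ‖Df‖_p = 2. -/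
/-- The level-`n` mean `M_p(n,f)` on a `(q+1)`-homogeneous tree. -/
noncomputable def Mp {V : Type*} (o : V) (lv : V → ℕ) (q : ℕ) (p : ℝ) (n : ℕ) (f : V → ℂ) : ℝ :=
  if n = 0 then ‖f o‖
  else ((1 / ((q + 1 : ℝ) * (q : ℝ) ^ (n - 1))) *
    ∑' v : {v : V // lv v = n}, ‖f v.1‖ ^ p) ^ (1 / p)

open Classical in
lemma lvl_eq_iff {V : Type*} (o : V) (par : V → V)
    (hreach : ∀ v : V, ∃ n : ℕ, par^[n] v = o) (v : V) (n : ℕ) :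
    lvl o par hreach v = n ↔ par^[n] v = o ∧ ∀ m < n, par^[m] v ≠ o := by
  unfold lvl
  exact Nat.find_eq_iff _

lemma lvl_eq_zero_iff {V : Type*} (o : V) (par : V → V)
    (hreach : ∀ v : V, ∃ n : ℕ, par^[n] v = o) (v : V) :
    lvl o par hreach v = 0 ↔ v = o := by
  rw [lvl_eq_iff]
  simp

lemma lvl_succ_iff {V : Type*} (o : V) (par : V → V)
    (hreach : ∀ v : V, ∃ n : ℕ, par^[n] v = o) (v : V) (n : ℕ) :
    lvl o par hreach v = n + 1 ↔ lvl o par hreach (par v) = n ∧ v ≠ o := by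
  rw [lvl_eq_iff, lvl_eq_iff]
  constructor
  · rintro ⟨h1, h2⟩
    refine ⟨⟨?_, ?_⟩, ?_⟩
    · rw [← Function.iterate_succ_apply]; exact h1
    · intro m hm hc
      exact h2 (m + 1) (by omega) (by rw [Function.iterate_succ_apply]; exact hc)
    · exact h2 0 (by omega)
  · rintro ⟨⟨h1, h2⟩, h3⟩
    refine ⟨?_, ?_⟩
    · rw [Function.iterate_succ_apply]; exact h1
    · intro m hm hc
      match m, hm with
      | 0, _ => exact h3 hc
      | (k+1), hm => exact h2 k (by omega) (by rw [← Function.iterate_succ_apply]; exact hc)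

theorem stmt19 {V : Type*} [DecidableEq V] (o : V) (par : V → V) (q : ℕ) (hq : 1 ≤ q)
    (hpar : par o = o) (hreach : ∀ v : V, ∃ n : ℕ, par^[n] v = o)
    (hfin : ∀ n : ℕ, {v : V | lvl o par hreach v = n}.Finite)
    (hcard : ∀ w : V, {v : V | par v = w ∧ v ≠ o}.ncard = if w = o then q + 1 else q)
    (p : ℝ) (hp : 1 ≤ p)
    (f : V → ℂ)
    (hfdef : f = fun v => if v = o then -1 else if lvl o par hreach v = 1 then 1 else 0) :
    (⨆ n, Mp o (lvl o par hreach) q p n f) = 1 ∧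
    (⨆ n, Mp o (lvl o par hreach) q p n (dderiv o par f)) = 2 := by
  set L := lvl o par hreach with hL
  have hp0 : p ≠ 0 := by positivity
  have hip : (0:ℝ) < 1 / p := by positivity
  have hqpos : (0:ℝ) < (q:ℝ) := by exact_mod_cast hq
  have hq1pos : (0:ℝ) < (q:ℝ) + 1 := by positivity
  -- levels
  have hL0 : ∀ v, L v = 0 ↔ v = o := fun v => lvl_eq_zero_iff o par hreach v
  have hLs : ∀ v n, L v = n + 1 ↔ L (par v) = n ∧ v ≠ o := fun v n =>
    lvl_succ_iff o par hreach v n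
  have hL1 : ∀ v, L v = 1 ↔ par v = o ∧ v ≠ o := by
    intro v
    rw [hLs v 0]
    simp [hL0]
  -- values of f
  have hfo : f o = -1 := by rw [hfdef]; simp
  have hf1 : ∀ v, L v = 1 → f v = 1 := by
    intro v hv
    have hvo : v ≠ o := ((hL1 v).1 hv).2
    rw [hfdef]; simp [hvo, hv]
  have hf2 : ∀ v, v ≠ o → L v ≠ 1 → f v = 0 := by
    intro v hv hv1
    rw [hfdef]; simp [hv, hv1]
  -- values of the derivative
  have hdo : dderiv o par f o = 0 := by simp [dderiv]
  have hd1 : ∀ v, L v = 1 → dderiv o par f v = 2 := by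
    intro v hv
    obtain ⟨h1, h2⟩ := (hL1 v).1 hv
    rw [dderiv]
    simp only [if_neg h2, h1, hfo, hf1 v hv]
    norm_num
  have hd2 : ∀ v, L v = 2 → dderiv o par f v = -1 := by
    intro v hv
    obtain ⟨h1, h2⟩ := (hLs v 1).1 hv
    rw [dderiv]
    simp only [if_neg h2, hf2 v h2 (by rw [hv]; omega), hf1 _ h1]
    ring
  have hd3 : ∀ v n, L v = n + 3 → dderiv o par f v = 0 := by
    intro v n hv
    obtain ⟨h1, h2⟩ := (hLs v (n+2)).1 hv
    have hp2 : par v ≠ o := by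
      intro h
      have h0 : L (par v) = 0 := (hL0 (par v)).2 h
      omega
    rw [dderiv]
    simp only [if_neg h2, hf2 v h2 (by rw [hv]; omega), hf2 _ hp2 (by rw [h1]; omega)]
    ring
  -- cardinalities
  have hcard1 : {v : V | L v = 1}.ncard = q + 1 := by
    have : {v : V | L v = 1} = {v : V | par v = o ∧ v ≠ o} := by
      ext v; exact hL1 v
    rw [this, hcard o, if_pos rfl]
  have hcard2 : {v : V | L v = 2}.ncard ≤ q * (q + 1) := by
    classical
    set S2 := (hfin 2).toFinset with hS2
    set T1 := (hfin 1).toFinset with hT1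
    have hmaps : ∀ v ∈ S2, par v ∈ T1 := by
      intro v hv
      rw [hS2, Set.Finite.mem_toFinset] at hv
      rw [hT1, Set.Finite.mem_toFinset]
      exact ((hLs v 1).1 hv).1
    have hfib : ∀ w ∈ T1, ({a ∈ S2 | par a = w} : Finset V).card ≤ q := by
      intro w hw
      rw [hT1, Set.Finite.mem_toFinset] at hw
      have hwo : w ≠ o := by
        intro h
        have h1 : L w = 1 := hw
        have h0 : L w = 0 := (hL0 w).2 h
        omega
      have hsub : (({a ∈ S2 | par a = w} : Finset V) : Set V) ⊆ {v : V | par v = w ∧ v ≠ o} := by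
        intro v hv
        simp only [Finset.coe_filter, Set.mem_setOf_eq] at hv
        obtain ⟨hv1, hv2⟩ := hv
        rw [hS2, Set.Finite.mem_toFinset] at hv1
        exact ⟨hv2, ((hLs v 1).1 hv1).2⟩
      have hfinw : {v : V | par v = w ∧ v ≠ o}.Finite := by
        apply Set.finite_of_ncard_ne_zero
        rw [hcard w, if_neg hwo]; omega
      have := Set.ncard_le_ncard hsub hfinw
      rwa [Set.ncard_coe_finset, hcard w, if_neg hwo] at this
    have hle := Finset.card_le_mul_card_image_of_maps_to hmaps q hfib
    have hT1card : T1.card = q + 1 := by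
      rw [← Set.ncard_coe_finset, hT1, Set.Finite.coe_toFinset, hcard1]
    have hS2card : {v : V | L v = 2}.ncard = S2.card := by
      rw [← Set.ncard_coe_finset, hS2, Set.Finite.coe_toFinset]
    rw [hS2card]
    calc S2.card ≤ q * T1.card := hle
    _ = q * (q + 1) := by rw [hT1card]
  -- tsum over a level with constant value c
  have htsum : ∀ (n : ℕ) (g : V → ℂ) (c : ℝ), (∀ v, L v = n → ‖g v‖ ^ p = c) →
      (∑' v : {v : V // L v = n}, ‖g v.1‖ ^ p)
        = ({v : V | L v = n}.ncard : ℝ) * c := by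
    intro n g c hc
    haveI : Fintype {v : V // L v = n} := (hfin n).fintype
    rw [tsum_fintype]
    have hc2 : Fintype.card {v : V // L v = n} = {v : V | L v = n}.ncard := by
      rw [← Nat.card_eq_fintype_card]
      exact Nat.card_coe_set_eq _
    rw [Finset.sum_congr rfl (fun v _ => hc v.1 v.2), Finset.sum_const, Finset.card_univ,
      nsmul_eq_mul, hc2]
  -- Mp values for f
  have hMf0 : Mp o L q p 0 f = 1 := by simp [Mp, hfo]
  have hMf1 : Mp o L q p 1 f = 1 := by
    rw [Mp, if_neg one_ne_zero, htsum 1 f 1 (by intro v hv; rw [hf1 v hv]; simp), hcard1]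
    push_cast
    rw [pow_zero, mul_one, one_div, inv_mul_cancel₀ (by positivity)]
    exact Real.one_rpow _
  have hMf2 : ∀ n, Mp o L q p (n + 2) f = 0 := by
    intro n
    rw [Mp, if_neg (by omega), htsum (n+2) f 0 ?_, mul_zero, mul_zero,
      Real.zero_rpow (by positivity)]
    intro v hv
    have hvo : v ≠ o := by
      intro h
      have h0 : L v = 0 := (hL0 v).2 h
      omega
    rw [hf2 v hvo (by omega)]
    simp [Real.zero_rpow hp0]
  -- Mp values for the derivative
  have hMd0 : Mp o L q p 0 (dderiv o par f) = 0 := by simp [Mp, hdo]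
  have hMd1 : Mp o L q p 1 (dderiv o par f) = 2 := by
    rw [Mp, if_neg one_ne_zero,
      htsum 1 (dderiv o par f) ((2:ℝ) ^ p) (by intro v hv; rw [hd1 v hv]; simp), hcard1]
    have h2 : (1 / ((q + 1 : ℝ) * (q : ℝ) ^ (1 - 1)) * (((q + 1 : ℕ) : ℝ) * (2:ℝ) ^ p))
        = (2:ℝ) ^ p := by
      push_cast
      rw [pow_zero, mul_one]
      field_simp
    rw [h2, ← Real.rpow_mul (by norm_num), mul_one_div, div_self hp0, Real.rpow_one]
  have hMd2 : Mp o L q p 2 (dderiv o par f) ≤ 1 := by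
    rw [Mp, if_neg (by omega),
      htsum 2 (dderiv o par f) 1 (by intro v hv; rw [hd2 v hv]; simp)]
    apply Real.rpow_le_one (by positivity) ?_ (le_of_lt hip)
    rw [mul_one]
    rw [div_mul_eq_mul_div, one_mul, div_le_one (by positivity)]
    calc ({v : V | L v = 2}.ncard : ℝ) ≤ (q * (q + 1) : ℕ) := by exact_mod_cast hcard2
      _ = (q + 1 : ℝ) * (q : ℝ) ^ (2 - 1) := by push_cast; ring
  have hMd3 : ∀ n, Mp o L q p (n + 3) (dderiv o par f) = 0 := by
    intro n
    rw [Mp, if_neg (by omega), htsum (n+3) (dderiv o par f) 0 ?_, mul_zero, mul_zero,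
      Real.zero_rpow (by positivity)]
    intro v hv
    rw [hd3 v n hv]
    simp [Real.zero_rpow hp0]
  constructor
  · apply le_antisymm
    · apply ciSup_le
      intro n
      match n with
      | 0 => rw [hMf0]
      | 1 => rw [hMf1]
      | (k+2) => rw [hMf2 k]; norm_num
    · have hb : BddAbove (Set.range fun n => Mp o L q p n f) := by
        refine ⟨1, ?_⟩
        rintro x ⟨n, rfl⟩
        show Mp o L q p n f ≤ 1
        match n with
        | 0 => rw [hMf0]
        | 1 => rw [hMf1]
        | (k+2) => rw [hMf2 k]; norm_num
      have := le_ciSup hb 0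
      rwa [hMf0] at this
  · apply le_antisymm
    · apply ciSup_le
      intro n
      match n with
      | 0 => rw [hMd0]; norm_num
      | 1 => rw [hMd1]
      | 2 => linarith [hMd2]
      | (k+3) => rw [hMd3 k]; norm_num
    · have hb : BddAbove (Set.range fun n => Mp o L q p n (dderiv o par f)) := by
        refine ⟨2, ?_⟩
        rintro x ⟨n, rfl⟩
        show Mp o L q p n (dderiv o par f) ≤ 2
        match n with
        | 0 => rw [hMd0]; norm_num
        | 1 => rw [hMd1]
        | 2 => linarith [hMd2]
        | (k+3) => rw [hMd3 k]; norm_num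
      have := le_ciSup hb 1
      rwa [hMd1] at this
end
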